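/- arXiv:1803.08674 — 3 statements merged into one kernel-verified Lean document; each statement's English description precedes it below -/
import Mathlib

section
/- Let l_A, l_B, l_C > 0 and set α = e^{l_A/2}, γ = e^{-l_B/2}, β = (cosh(l_C/2) + sinh(l_C/2))/α = e^{(l_C − l_A)/2}. Then for ρ(a) = [[α, αβγ + α^{-1}],[0, α^{-1}]] and ρ(b) = [[γ, 0],[−β^{-1}−γ^{-1}, γ^{-1}]], the matrix ρ(c) = ρ(b)^{-1}ρ(a)^{-1} satisfies |tr(ρ(c))| = 2 cosh(l_C/2), and also |tr ρ(a)| = 2 cosh(l_A/2) and |tr ρ(b)| = 2 cosh(l_B/2). -/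
/-- with `α = e^{l_A/2}`, `γ = e^{-l_B/2}`,
`β = (cosh(l_C/2)+sinh(l_C/2))/α = e^{(l_C−l_A)/2}`, the matrices
`ρ(a) = [[α, αβγ+α⁻¹],[0,α⁻¹]]`, `ρ(b) = [[γ,0],[−β⁻¹−γ⁻¹,γ⁻¹]]`, and
`ρ(c) = ρ(b)⁻¹ρ(a)⁻¹` satisfy `|tr ρ(c)| = 2cosh(l_C/2)`, `|tr ρ(a)| = 2cosh(l_A/2)`,
`|tr ρ(b)| = 2cosh(l_B/2)`. -/
theorem trace_boundary_lengths (lA lB lC : ℝ) (hA : 0 < lA) (hB : 0 < lB) (hC : 0 < lC)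
    (α β γ : ℝ) (hα : α = Real.exp (lA / 2)) (hγ : γ = Real.exp (-lB / 2))
    (hβ : β = (Real.cosh (lC / 2) + Real.sinh (lC / 2)) / α) :
    β = Real.exp ((lC - lA) / 2) ∧
    |Matrix.trace ((!![γ, 0; -β⁻¹ - γ⁻¹, γ⁻¹] : Matrix (Fin 2) (Fin 2) ℝ)⁻¹ *
        (!![α, α * β * γ + α⁻¹; 0, α⁻¹] : Matrix (Fin 2) (Fin 2) ℝ)⁻¹)|
      = 2 * Real.cosh (lC / 2) ∧
    |Matrix.trace (!![α, α * β * γ + α⁻¹; 0, α⁻¹] : Matrix (Fin 2) (Fin 2) ℝ)|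
      = 2 * Real.cosh (lA / 2) ∧
    |Matrix.trace (!![γ, 0; -β⁻¹ - γ⁻¹, γ⁻¹] : Matrix (Fin 2) (Fin 2) ℝ)|
      = 2 * Real.cosh (lB / 2) := by
  have hα0 : 0 < α := hα ▸ Real.exp_pos _
  have hγ0 : 0 < γ := hγ ▸ Real.exp_pos _
  have hβval : β = Real.exp ((lC - lA) / 2) := by
    rw [hβ, Real.cosh_add_sinh, hα, ← Real.exp_sub]
    ring_nf
  have hβ0 : 0 < β := hβval ▸ Real.exp_pos _
  have hαβ : α * β = Real.exp (lC / 2) := by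
    rw [hα, hβval, ← Real.exp_add]; ring_nf
  have hαne := hα0.ne'
  have hβne := hβ0.ne'
  have hγne := hγ0.ne'
  have hAinv : (!![α, α * β * γ + α⁻¹; 0, α⁻¹] : Matrix (Fin 2) (Fin 2) ℝ)⁻¹
      = !![α⁻¹, -(α * β * γ + α⁻¹); 0, α] := by
    apply Matrix.inv_eq_right_inv
    ext i j
    fin_cases i <;> fin_cases j <;>
      simp [Matrix.mul_apply, Fin.sum_univ_two] <;> field_simp <;> ring
  have hBinv : (!![γ, 0; -β⁻¹ - γ⁻¹, γ⁻¹] : Matrix (Fin 2) (Fin 2) ℝ)⁻¹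
      = !![γ⁻¹, 0; β⁻¹ + γ⁻¹, γ] := by
    apply Matrix.inv_eq_right_inv
    ext i j
    fin_cases i <;> fin_cases j <;>
      simp [Matrix.mul_apply, Fin.sum_univ_two] <;> field_simp <;> ring
  have cosh_eq : ∀ x : ℝ, 2 * Real.cosh x = Real.exp x + Real.exp (-x) := by
    intro x; rw [Real.cosh_eq]; ring
  refine ⟨hβval, ?_, ?_, ?_⟩
  · rw [hAinv, hBinv]
    have htr : Matrix.trace ((!![γ⁻¹, 0; β⁻¹ + γ⁻¹, γ] : Matrix (Fin 2) (Fin 2) ℝ) *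
        !![α⁻¹, -(α * β * γ + α⁻¹); 0, α]) = -(α * β + (α * β)⁻¹) := by
      simp [Matrix.trace_fin_two, Matrix.mul_apply, Fin.sum_univ_two, mul_inv]
      field_simp
      ring
    rw [htr, abs_neg, abs_of_pos (by positivity), hαβ, ← Real.exp_neg, cosh_eq]
  · rw [Matrix.trace_fin_two_of, abs_of_pos (by positivity), cosh_eq, hα, Real.exp_neg]
  · rw [Matrix.trace_fin_two_of, abs_of_pos (by positivity), cosh_eq, hγ,
      show -lB / 2 = -(lB / 2) by ring, Real.exp_neg, inv_inv]
    ring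
end

section
/- For integers p, r ≥ 0 and q ≥ 1 with p + q + r = n, the q×q matrix M with entries M_{ij} = binom(p+r, p − j + i) (1 ≤ i, j ≤ q, with the convention binom(m, k) = 0 for k < 0 or k > m) has positive determinant. -/
/-- Binomial coefficient `binom(m, k)` for `k : ℤ`, with the convention that it vanishes
for `k < 0` (and for `k > m`, via `Nat.choose`). -/
noncomputable def binZ (m : ℕ) (k : ℤ) : ℝ :=
  if 0 ≤ k then (m.choose k.toNat : ℝ) else 0

/-!
Pascal's rule `binom(m+1, k) = binom(m, k) + binom(m, k-1)` splits every row of the matrix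
`(binom(m+1, b i - j))`, so by multilinearity its determinant is the sum over all `ε ∈ {0,1}^q` of
the determinants of `(binom(m, b i - ε i - j))`. If `b` is strictly increasing, every `b - ε` is
weakly increasing: either two rows coincide, or `b - ε` is again strictly increasing. Induction on
`m` therefore shows the determinant is nonnegative, the base case being `binom(0, b i - j)`, which
is the identity matrix or has a zero row. For `b i = c + i` with `c ≤ m + 1` the constant choice
`ε = [c > 0]` leads to `b - ε = max(c - 1, 0) + i`, so a positive term survives all the way down
to the identity matrix.
-/

open Matrix

section

variable {q : ℕ}

noncomputable def binomMatrix (m : ℕ) (b : Fin q → ℤ) : Matrix (Fin q) (Fin q) ℝ :=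
  of fun i j => binZ m (b i - j)

theorem binZ_succ (m : ℕ) (k : ℤ) : binZ (m + 1) k = binZ m k + binZ m (k - 1) := by
  unfold binZ
  rcases lt_trichotomy k 0 with hk | rfl | hk
  · simp only [if_neg (show ¬ 0 ≤ k by omega), if_neg (show ¬ 0 ≤ k - 1 by omega), add_zero]
  · norm_num
  · have hk' : k.toNat = (k - 1).toNat + 1 := by omega
    simp only [if_pos hk.le, if_pos (show 0 ≤ k - 1 by omega), hk', Nat.choose_succ_succ,
      Nat.cast_add]
    ring

theorem binZ_zero (k : ℤ) : binZ 0 k = if k = 0 then 1 else 0 := by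
  unfold binZ
  rcases lt_trichotomy k 0 with hk | rfl | hk
  · rw [if_neg (by omega), if_neg (by omega)]
  · norm_num
  · rw [if_pos hk.le, if_neg hk.ne', Nat.choose_eq_zero_of_lt (by omega), Nat.cast_zero]

theorem binomMatrix_zero_natCast : binomMatrix 0 (fun i : Fin q => (i : ℤ)) = 1 := by
  ext i j
  simp only [binomMatrix, of_apply, binZ_zero, one_apply, sub_eq_zero, Nat.cast_inj,
    Fin.val_inj]

theorem det_binomMatrix_succ (m : ℕ) (b : Fin q → ℤ) :
    (binomMatrix (m + 1) b).det =
      ∑ ε : Fin q → Bool, (binomMatrix m fun i => b i - if ε i then 1 else 0).det := by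
  have hrows : binomMatrix (m + 1) b =
      fun i => ∑ e : Bool, fun j : Fin q => binZ m (b i - (if e then 1 else 0) - j) := by
    ext i j
    simp only [binomMatrix, of_apply, binZ_succ, Fintype.sum_bool, Pi.add_apply, if_true,
      Bool.false_eq_true, if_false, sub_zero, sub_right_comm _ (1 : ℤ)]
    exact add_comm _ _
  change detRowAlternating.toMultilinearMap (binomMatrix (m + 1) b) = _
  rw [hrows, MultilinearMap.map_sum]
  rfl

theorem det_binomMatrix_eq_zero_of_not_injective (m : ℕ) {b : Fin q → ℤ}
    (hb : ¬ Function.Injective b) : (binomMatrix m b).det = 0 := by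
  obtain ⟨i, j, hij, hne⟩ : ∃ i j, b i = b j ∧ i ≠ j := by
    simpa [Function.Injective] using hb
  exact det_zero_of_row_eq hne (funext fun k => by simp only [binomMatrix, of_apply, hij])

theorem det_binomMatrix_zero_nonneg {b : Fin q → ℤ} (hb : StrictMono b) :
    0 ≤ (binomMatrix 0 b).det := by
  by_cases hrange : ∀ i, 0 ≤ b i ∧ b i < q
  · -- `b` is a strictly monotone self-map of `Fin q`, hence the identity.
    let f : Fin q → Fin q := fun i => ⟨(b i).toNat, by have := hrange i; omega⟩
    have hf : StrictMono f := fun i j hij => by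
      have := hb hij; have := hrange i; simp only [f, Fin.mk_lt_mk]; omega
    have hbf : b = fun i : Fin q => (i : ℤ) := funext fun i => by
      have := congrArg Fin.val (hf.apply_eq (x := i)); have := hrange i
      simp only [f] at *; omega
    rw [hbf, binomMatrix_zero_natCast, det_one]
    exact zero_le_one
  · push Not at hrange
    obtain ⟨i, hi⟩ := hrange
    refine (det_eq_zero_of_row_eq_zero i fun j => ?_).ge
    have hj := j.isLt
    rw [binomMatrix, of_apply, binZ_zero, if_neg]
    by_cases h0 : 0 ≤ b i
    · have := hi h0; omega
    · omega

theorem monotone_sub_ite {α : Type*} [PartialOrder α] {b : α → ℤ} (hb : StrictMono b)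
    (ε : α → Bool) : Monotone fun i => b i - if ε i then 1 else 0 := by
  intro i j hij
  rcases hij.eq_or_lt with rfl | hlt
  · exact le_rfl
  · have := hb hlt
    dsimp only
    split_ifs <;> omega

theorem det_binomMatrix_nonneg (m : ℕ) {b : Fin q → ℤ} (hb : Monotone b) :
    0 ≤ (binomMatrix m b).det := by
  by_cases hinj : Function.Injective b
  swap
  · exact (det_binomMatrix_eq_zero_of_not_injective m hinj).ge
  have hb' := hb.strictMono_of_injective hinj
  cases m with
  | zero => exact det_binomMatrix_zero_nonneg hb'
  | succ m =>
    rw [det_binomMatrix_succ]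
    exact Finset.sum_nonneg fun ε _ => det_binomMatrix_nonneg m (monotone_sub_ite hb' ε)

theorem det_binomMatrix_natCast_add_pos {m c : ℕ} (hc : c ≤ m) :
    0 < (binomMatrix m fun i : Fin q => (c + i : ℤ)).det := by
  induction m generalizing c with
  | zero =>
    obtain rfl : c = 0 := by omega
    simp only [Nat.cast_zero, zero_add, binomMatrix_zero_natCast, det_one, zero_lt_one]
  | succ m ih =>
    have hmono : StrictMono fun i : Fin q => (c + i : ℤ) := fun i j hij => by
      have : (i : ℕ) < j := hij
      dsimp only
      omega
    let ε₀ : Fin q → Bool := fun _ => decide (0 < c)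
    have hshift : (fun i : Fin q => (c + i : ℤ) - if ε₀ i then 1 else 0) =
        fun i : Fin q => ((c - 1 : ℕ) + i : ℤ) := funext fun i => by
      simp only [ε₀, decide_eq_true_eq]
      split_ifs <;> omega
    calc 0 < (binomMatrix m fun i : Fin q => ((c - 1 : ℕ) + i : ℤ)).det := ih (by omega)
      _ = (binomMatrix m fun i => (c + i : ℤ) - if ε₀ i then 1 else 0).det := by rw [hshift]
      _ ≤ ∑ ε : Fin q → Bool, (binomMatrix m fun i => (c + i : ℤ) - if ε i then 1 else 0).det :=
          Finset.single_le_sum (fun ε _ => det_binomMatrix_nonneg m (monotone_sub_ite hmono ε))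
            (Finset.mem_univ ε₀)
      _ = _ := (det_binomMatrix_succ m _).symm

end

theorem binomial_det_pos_general (p q r : ℕ) :
    0 < Matrix.det (Matrix.of fun i j : Fin q =>
      binZ (p + r) ((p : ℤ) - (j : ℤ) + (i : ℤ))) := by
  simpa only [binomMatrix, sub_add_eq_add_sub] using
    det_binomMatrix_natCast_add_pos (q := q) (Nat.le_add_right p r)

/-- for `p, r ≥ 0`, `q ≥ 1` with `p + q + r = n`, the `q×q` matrix with
entries `binom(p+r, p − j + i)` has positive determinant. -/
theorem binomial_det_pos (n p q r : ℕ) (hq : 1 ≤ q) (h : p + q + r = n) :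
    0 < Matrix.det (Matrix.of fun i j : Fin q =>
      binZ (p + r) ((p : ℤ) - (j : ℤ) + (i : ℤ))) :=
  binomial_det_pos_general p q r
end

section
/- For positive integers p, q, r with p + q + r = n, the triple ratio of the three Veronese flags ξ(∞), ξ(1), ξ(0) in Sym^{n−1}ℝ² is positive; equivalently, the triangle invariant τ_{pqr} = log T_{pqr}(ξ(∞), ξ(1), ξ(0)) of any n-Fuchsian representation is a well-defined real number. -/
/-- The wedge of three tuples of vectors, as a determinant in the standard basis. -/
noncomputable def wedge {n p q r : ℕ} (h : p + q + r = n)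
    (u : Fin p → (Fin n → ℝ)) (v : Fin q → (Fin n → ℝ)) (w : Fin r → (Fin n → ℝ)) : ℝ :=
  Matrix.det (Matrix.of fun i j => Fin.append (Fin.append u v) w (Fin.cast h.symm i) j)

/-- `X(p,q,r) = e^(p) ∧ f^(q) ∧ g^(r)`. -/
noncomputable def Xw (n : ℕ) (e f g : (i : ℕ) → Fin i → (Fin n → ℝ)) (p q r : ℕ) : ℝ :=
  if h : p + q + r = n then wedge h (e p) (f q) (g r) else 0

/-- The triple ratio `T_{pqr}`. -/
noncomputable def tripleRatio (n : ℕ) (e f g : (i : ℕ) → Fin i → (Fin n → ℝ))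
    (p q r : ℕ) : ℝ :=
  (Xw n e f g (p+1) q (r-1) / Xw n e f g (p-1) q (r+1)) *
  (Xw n e f g p (q-1) (r+1) / Xw n e f g p (q+1) (r-1)) *
  (Xw n e f g (p-1) (q+1) r / Xw n e f g (p+1) (q-1) r)

/-- The Veronese flag `ξ(r)` in coordinates (basis `b_m = X^{n−m}Y^{m−1}` of
`Sym^{n−1}ℝ²`): `ξ(r)^(i)` is spanned by the coefficient vectors of
`(rX+Y)^{n−i}X^{i−1−k}Y^k`, and `ξ(∞)^(i)` by `b_1, …, b_i`. -/
noncomputable def ver (n : ℕ) : Option ℝ → (i : ℕ) → Fin i → (Fin n → ℝ)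
  | some r => fun i k m =>
      if (k : ℕ) ≤ (m : ℕ) then
        ((n - i).choose ((m : ℕ) - (k : ℕ)) : ℝ) * r ^ ((n - i) - ((m : ℕ) - (k : ℕ)))
      else 0
  | none => fun _ k m => if (m : ℕ) = (k : ℕ) then 1 else 0

/-!
With `m = p + r`, the wedge `X(p,q,r)` of the Veronese flags is the minor of the upper triangular
Toeplitz matrix `T_m = (C(m, j - i))` on rows `0, …, q-1` and columns `p, …, p+q-1`, because the
vectors spanning `ξ(∞)^(p)` and `ξ(0)^(r)` are standard basis vectors. Since `T_{m+1} = T_m T_1`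
and the 0/1 bidiagonal matrix `T_1` is totally nonnegative, Cauchy–Binet makes every `T_m` totally
nonnegative. The same expansion bounds a minor of `T_{m+1}` from below by the minor of `T_m` with
columns shifted left by one, times a unitriangular minor of `T_1`; after `p` shifts one reaches a
unitriangular minor of `T_{m-p}`. So all six wedges in the triple ratio are positive.
-/

open Finset Equiv

namespace Matrix

variable {R : Type*} [CommRing R]

theorem det_mul_eq_sum_prod_mul_det_submatrix {m n : Type*} [Fintype m] [DecidableEq m]
    [Fintype n] [DecidableEq n] (A : Matrix m n R) (B : Matrix n m R) :
    (A * B).det = ∑ k : m → n, (∏ i, B (k i) i) * (A.submatrix id k).det := by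
  simp only [det_apply', mul_apply, prod_univ_sum, Fintype.piFinset_univ, mul_sum]
  rw [sum_comm]
  refine sum_congr rfl fun k _ => sum_congr rfl fun σ _ => ?_
  rw [prod_mul_distrib]
  simp only [submatrix_apply, id_eq]
  ring

theorem det_mul_eq_sum_injective_prod_mul_det_submatrix {m n : Type*} [Fintype m]
    [DecidableEq m] [Fintype n] [DecidableEq n] (A : Matrix m n R) (B : Matrix n m R) :
    (A * B).det = ∑ k : m → n with Function.Injective k,
      (∏ i, B (k i) i) * (A.submatrix id k).det := by
  rw [det_mul_eq_sum_prod_mul_det_submatrix,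
    ← sum_filter_add_sum_filter_not univ fun k : m → n => Function.Injective k, add_eq_left]
  refine sum_eq_zero fun k hk => ?_
  obtain ⟨i, j, hij, hne⟩ : ∃ i j, k i = k j ∧ i ≠ j := by
    simpa [Function.Injective] using hk
  rw [det_zero_of_column_eq hne fun t => by simp [hij], mul_zero]

open scoped Classical in
/-- The Cauchy–Binet formula. -/
theorem det_mul_eq_sum_strictMono {m N : ℕ} (A : Matrix (Fin m) (Fin N) R)
    (B : Matrix (Fin N) (Fin m) R) :
    (A * B).det = ∑ f : Fin m → Fin N with StrictMono f,
      (A.submatrix id f).det * (B.submatrix f id).det := by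
  rw [det_mul_eq_sum_injective_prod_mul_det_submatrix]
  have hsum : ∀ f : Fin m → Fin N, (A.submatrix id f).det * (B.submatrix f id).det =
      ∑ σ : Perm (Fin m), (∏ i, B (f (σ i)) i) * (A.submatrix id (f ∘ σ)).det := by
    intro f
    simp only [det_apply' (B.submatrix f id), mul_sum]
    refine sum_congr rfl fun σ _ => ?_
    rw [show A.submatrix id (f ∘ σ) = (A.submatrix id f).submatrix id σ from rfl,
      det_permute']
    simp only [submatrix_apply, id_eq]
    ring
  simp only [hsum, ← sum_product']
  refine (sum_nbij' (fun fσ : (Fin m → Fin N) × Perm (Fin m) => fσ.1 ∘ fσ.2)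
    (fun k : Fin m → Fin N => (k ∘ Tuple.sort k, (Tuple.sort k)⁻¹)) ?_ ?_ ?_ ?_
    fun _ _ => rfl).symm
  · rintro ⟨f, σ⟩ h
    simp only [mem_filter, mem_product, mem_univ, true_and, and_true] at h ⊢
    exact h.injective.comp σ.injective
  · intro k hk
    simp only [mem_filter, mem_product, mem_univ, true_and, and_true] at hk ⊢
    exact (Tuple.monotone_sort k).strictMono_of_injective (hk.comp (Tuple.sort k).injective)
  · rintro ⟨f, σ⟩ h
    simp only [mem_filter, mem_product, mem_univ, true_and, and_true] at h
    have hsort : (f ∘ σ) ∘ Tuple.sort (f ∘ σ) = (f ∘ σ) ∘ ⇑(σ⁻¹) :=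
      Tuple.unique_monotone (Tuple.monotone_sort _)
        (by simpa [Function.comp_assoc] using h.monotone)
    have hσ : Tuple.sort (f ∘ σ) = σ⁻¹ :=
      Equiv.ext fun i => (h.injective.comp σ.injective) (congrFun hsort i)
    simp [hσ, Function.comp_assoc]
  · intro k _
    simp [Function.comp_assoc]

theorem det_eq_mul_det_submatrix_succ_of_col_zero {k : ℕ}
    (A : Matrix (Fin (k + 1)) (Fin (k + 1)) R) (h : ∀ i, i ≠ 0 → A i 0 = 0) :
    A.det = A 0 0 * (A.submatrix Fin.succ Fin.succ).det := by
  rw [det_succ_column_zero, Fin.sum_univ_succ, sum_eq_zero fun i _ => by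
    rw [h i.succ i.succ_ne_zero, mul_zero, zero_mul]]
  simp

theorem det_eq_mul_det_submatrix_succ_of_row_zero {k : ℕ}
    (A : Matrix (Fin (k + 1)) (Fin (k + 1)) R) (h : ∀ j, j ≠ 0 → A 0 j = 0) :
    A.det = A 0 0 * (A.submatrix Fin.succ Fin.succ).det := by
  rw [← det_transpose, det_eq_mul_det_submatrix_succ_of_col_zero _ h, ← det_transpose]
  rfl

theorem det_eq_det_submatrix_of_row_eq_single {m n : Type*} [Fintype m] [DecidableEq m]
    [Fintype n] [DecidableEq n] (M : Matrix n n R) {e : m → n} (he : Function.Injective e)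
    (h : ∀ i, i ∉ Set.range e → M i = Pi.single i 1) : M.det = (M.submatrix e e).det := by
  rw [twoBlockTriangular_det M (· ∈ Set.range e) fun i hi j hj => by
    rw [h i hi, Pi.single_apply, if_neg (by rintro rfl; exact hi hj)]]
  have hid : toSquareBlockProp M (· ∉ Set.range e) = 1 := by
    ext i j
    simp [toSquareBlockProp, toBlock_apply, h i i.2, Pi.single_apply, one_apply, Subtype.ext_iff,
      eq_comm]
  rw [hid, det_one, mul_one]
  convert (det_submatrix_equiv_self (Equiv.ofInjective e he) _).symm
  rfl

variable [PartialOrder R] [IsOrderedRing R]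

def IsTotallyNonneg {m n : ℕ} (A : Matrix (Fin m) (Fin n) R) : Prop :=
  ∀ ⦃k : ℕ⦄ (f : Fin k → Fin m) (g : Fin k → Fin n), StrictMono f → StrictMono g →
    0 ≤ (A.submatrix f g).det

theorem IsTotallyNonneg.mul {m N n : ℕ} {A : Matrix (Fin m) (Fin N) R}
    {B : Matrix (Fin N) (Fin n) R} (hA : A.IsTotallyNonneg) (hB : B.IsTotallyNonneg) :
    (A * B).IsTotallyNonneg := by
  intro k f g hf hg
  rw [show (A * B).submatrix f g = A.submatrix f id * B.submatrix id g from rfl,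
    det_mul_eq_sum_strictMono]
  exact sum_nonneg fun h hh =>
    mul_nonneg (hA f h hf (mem_filter.1 hh).2) (hB h g (mem_filter.1 hh).2 hg)

theorem IsTotallyNonneg.det_submatrix_mul_det_submatrix_le {m N n k : ℕ}
    {A : Matrix (Fin m) (Fin N) R} {B : Matrix (Fin N) (Fin n) R} (hA : A.IsTotallyNonneg)
    (hB : B.IsTotallyNonneg) {f : Fin k → Fin m} {h : Fin k → Fin N} {g : Fin k → Fin n}
    (hf : StrictMono f) (hh : StrictMono h) (hg : StrictMono g) :
    (A.submatrix f h).det * (B.submatrix h g).det ≤ ((A * B).submatrix f g).det := by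
  classical
  rw [show (A * B).submatrix f g = A.submatrix f id * B.submatrix id g from rfl,
    det_mul_eq_sum_strictMono]
  exact single_le_sum (f := fun h => (A.submatrix f h).det * (B.submatrix h g).det)
    (fun h' hh' =>
      mul_nonneg (hA f h' hf (mem_filter.1 hh').2) (hB h' g (mem_filter.1 hh').2 hg))
    (mem_filter.2 ⟨mem_univ _, hh⟩)

theorem det_band_nonneg {e : ℕ} (he : e ≤ 1) {k : ℕ} (f g : Fin k → ℕ) (hf : StrictMono f)
    (hg : StrictMono g) :
    0 ≤ (of fun i j => if f i ≤ g j ∧ g j ≤ f i + e then (1 : R) else 0).det := by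
  induction k with
  | zero => simp
  | succ k ih =>
    have h00 :
        0 ≤ (of fun i j => if f i ≤ g j ∧ g j ≤ f i + e then (1 : R) else 0) 0 0 := by
      simp only [of_apply]; split_ifs <;> simp
    have hminor := ih (f ∘ Fin.succ) (g ∘ Fin.succ) (hf.comp Fin.strictMono_succ)
      (hg.comp Fin.strictMono_succ)
    -- If `g 0 ≤ f 0` the first column vanishes below the corner; otherwise `e ≤ 1` makes the
    -- first row vanish after the corner.
    rcases le_or_gt (g 0) (f 0) with hgf | hfg
    · rw [det_eq_mul_det_submatrix_succ_of_col_zero]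
      · exact mul_nonneg h00 hminor
      · intro i hi
        have := hf (Fin.pos_iff_ne_zero.2 hi)
        simp only [of_apply]; rw [if_neg (by omega)]
    · rw [det_eq_mul_det_submatrix_succ_of_row_zero]
      · exact mul_nonneg h00 hminor
      · intro j hj
        have := hg (Fin.pos_iff_ne_zero.2 hj)
        simp only [of_apply]; rw [if_neg (by omega)]

end Matrix

open Matrix

section BinomialToeplitz

variable {R : Type*} [CommRing R]

def binomialToeplitz (N m : ℕ) : Matrix (Fin N) (Fin N) R :=
  of fun i j => if (i : ℕ) ≤ j then (m.choose (j - i) : R) else 0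

theorem binomialToeplitz_apply_of_le_one {N e : ℕ} (he : e ≤ 1) (i j : Fin N) :
    (binomialToeplitz N e : Matrix (Fin N) (Fin N) R) i j =
      if (i : ℕ) ≤ j ∧ (j : ℕ) ≤ i + e then 1 else 0 := by
  simp only [binomialToeplitz, of_apply]
  split_ifs with hij hband hband
  · obtain h | h : (j : ℕ) - i = 0 ∨ (j : ℕ) - i = e := by omega
    all_goals simp [h]
  · rw [Nat.choose_eq_zero_of_lt (by omega), Nat.cast_zero]
  · omega
  · rfl

theorem binomialToeplitz_succ (N m : ℕ) :
    (binomialToeplitz N (m + 1) : Matrix (Fin N) (Fin N) R) =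
      binomialToeplitz N m * binomialToeplitz N 1 := by
  ext i j
  have hsplit : ∀ t : Fin N, (binomialToeplitz N m : Matrix (Fin N) (Fin N) R) i t *
      binomialToeplitz N 1 t j = (if t = j then binomialToeplitz N m i j else 0) +
        (if (t : ℕ) + 1 = j then binomialToeplitz N m i t else 0) := by
    intro t
    rw [binomialToeplitz_apply_of_le_one le_rfl]
    by_cases htj : t = j
    · subst htj; simp
    · have : (t : ℕ) ≠ j := fun h => htj (Fin.ext h)
      split_ifs <;> first | omega | simp
  rw [mul_apply, Finset.sum_congr rfl fun t _ => hsplit t, Finset.sum_add_distrib,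
    Finset.sum_ite_eq']
  obtain ⟨_ | j, hj⟩ := j
  · simp [binomialToeplitz]
  · rw [Finset.sum_eq_single (⟨j, by omega⟩ : Fin N) (fun t _ ht => if_neg fun h =>
      ht (Fin.ext (by simp at h ⊢; omega))) (by simp)]
    simp only [binomialToeplitz, of_apply, Finset.mem_univ, if_true]
    rcases Nat.lt_trichotomy (i : ℕ) (j + 1) with hi | hi | hi
    · rw [if_pos hi.le, if_pos hi.le, if_pos (by omega), show j + 1 - i = (j - i) + 1 by omega,
        Nat.choose_succ_succ', Nat.cast_add, add_comm]
    · simp [hi]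
    · simp [show ¬ (i : ℕ) ≤ j + 1 by omega, show ¬ (i : ℕ) ≤ j by omega]

def consecutive {q N : ℕ} (s : ℕ) (h : s + q ≤ N) (j : Fin q) : Fin N := ⟨s + j, by omega⟩

theorem consecutive_strictMono {q N s : ℕ} (h : s + q ≤ N) : StrictMono (consecutive s h) :=
  fun a b hab => by simpa [consecutive] using hab

theorem det_binomialToeplitz_submatrix_consecutive_self {N q t : ℕ} (m : ℕ) (h : t + q ≤ N) :
    ((binomialToeplitz N m : Matrix (Fin N) (Fin N) R).submatrix (consecutive t h)
      (consecutive t h)).det = 1 := by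
  rw [det_of_isUpperTriangular]
  · exact Finset.prod_eq_one fun i _ => by simp [binomialToeplitz, consecutive]
  · intro i j hij
    have : (j : ℕ) < i := hij
    simp only [binomialToeplitz, consecutive, submatrix_apply, of_apply]
    rw [if_neg (by omega)]

theorem det_binomialToeplitz_one_submatrix_consecutive_succ {N q t : ℕ} (h : t + 1 + q ≤ N) :
    ((binomialToeplitz N 1 : Matrix (Fin N) (Fin N) R).submatrix (consecutive t (by omega))
      (consecutive (t + 1) h)).det = 1 := by
  rw [det_of_isLowerTriangular]
  · refine Finset.prod_eq_one fun i _ => ?_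
    have : t + 1 + (i : ℕ) - (t + i) = 1 := by omega
    simp [binomialToeplitz, consecutive, this]
  · intro i j hij
    have : (i : ℕ) < j := hij
    simp only [binomialToeplitz, consecutive, submatrix_apply, of_apply]
    rw [if_pos (by omega), Nat.choose_eq_zero_of_lt (by omega), Nat.cast_zero]

end BinomialToeplitz

section BinomialToeplitz

variable {R : Type*} [CommRing R] [PartialOrder R] [IsOrderedRing R]

theorem isTotallyNonneg_binomialToeplitz (N m : ℕ) :
    (binomialToeplitz N m : Matrix (Fin N) (Fin N) R).IsTotallyNonneg := by
  have hband : ∀ e ≤ 1, (binomialToeplitz N e : Matrix (Fin N) (Fin N) R).IsTotallyNonneg := by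
    intro e he k f g hf hg
    simpa only [submatrix, binomialToeplitz_apply_of_le_one he] using
      det_band_nonneg he (fun i => (f i : ℕ)) (fun j => (g j : ℕ)) hf hg
  induction m with
  | zero => exact hband 0 zero_le_one
  | succ m ih => rw [binomialToeplitz_succ]; exact ih.mul (hband 1 le_rfl)

end BinomialToeplitz

section BinomialToeplitz

variable {R : Type*} [CommRing R] [PartialOrder R] [IsStrictOrderedRing R]

theorem det_binomialToeplitz_submatrix_consecutive_pos {N q s m : ℕ} (hsm : s ≤ m)
    (h : s + q ≤ N) :
    0 < ((binomialToeplitz N m : Matrix (Fin N) (Fin N) R).submatrix (consecutive 0 (by omega))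
      (consecutive s h)).det := by
  induction s generalizing m with
  | zero => exact zero_lt_one.trans_eq (det_binomialToeplitz_submatrix_consecutive_self m _).symm
  | succ s ih =>
    obtain ⟨m, rfl⟩ : ∃ m', m = m' + 1 := ⟨m - 1, by omega⟩
    calc 0 < ((binomialToeplitz N m : Matrix (Fin N) (Fin N) R).submatrix
            (consecutive 0 (by omega)) (consecutive s (by omega))).det *
          ((binomialToeplitz N 1 : Matrix (Fin N) (Fin N) R).submatrix
            (consecutive s (by omega)) (consecutive (s + 1) h)).det := by
          rw [det_binomialToeplitz_one_submatrix_consecutive_succ, mul_one]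
          exact ih (by omega) (by omega)
      _ ≤ _ := (isTotallyNonneg_binomialToeplitz N m).det_submatrix_mul_det_submatrix_le
          (isTotallyNonneg_binomialToeplitz N 1) (consecutive_strictMono _)
          (consecutive_strictMono _) (consecutive_strictMono _)
      _ = _ := by rw [binomialToeplitz_succ N m]

end BinomialToeplitz

theorem wedge_veronese_eq_det (p q r : ℕ) :
    wedge rfl (ver (p + q + r) none p) (ver (p + q + r) (some 1) q)
        (ver (p + q + r) (some 0) r) =
      ((binomialToeplitz (p + q + r) (p + r) : Matrix (Fin _) (Fin _) ℝ).submatrix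
        (consecutive 0 (by omega : 0 + q ≤ p + q + r))
        (consecutive p (Nat.le_add_right _ r))).det := by
  have hmid : ∀ k : Fin q,
      consecutive p (Nat.le_add_right (p + q) r) k = Fin.castAdd r (Fin.natAdd p k) :=
    fun _ => rfl
  rw [wedge, det_eq_det_submatrix_of_row_eq_single _
    (consecutive_strictMono (Nat.le_add_right (p + q) r)).injective]
  · congr 1
    ext k j
    rw [submatrix_apply, submatrix_apply, of_apply, hmid k]
    have hpr : p + q + r - q = p + r := by omega
    simp only [Fin.cast_eq_self, Fin.append_left, Fin.append_right, ver, binomialToeplitz, of_apply,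
      consecutive, one_pow, mul_one, zero_add, hpr]
  · intro i hi
    induction i using Fin.addCases with
    | left i =>
      induction i using Fin.addCases with
      | left a =>
        ext j
        simp [ver, Pi.single_apply, Fin.ext_iff]
      | right b => exact absurd ⟨b, rfl⟩ hi
    | right c =>
      ext j
      simp only [ver, one_pow, mul_one, add_tsub_cancel_right, Fin.cast_eq_self, of_apply,
        Fin.append_right, Pi.single_apply, Fin.ext_iff, Fin.val_natAdd]
      split_ifs with hcj hj hj
      · simp [show (j : ℕ) - c = p + q by omega]
      · rcases lt_or_gt_of_ne (show (j : ℕ) - c ≠ p + q by omega) with hlt | hgt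
        · rw [zero_pow (by omega), mul_zero]
        · rw [Nat.choose_eq_zero_of_lt hgt, Nat.cast_zero, zero_mul]
      · omega
      · rfl

theorem Xw_veronese_pos {n p q r : ℕ} (h : p + q + r = n) :
    0 < Xw n (ver n none) (ver n (some 1)) (ver n (some 0)) p q r := by
  subst h
  rw [Xw, dif_pos rfl, wedge_veronese_eq_det]
  exact det_binomialToeplitz_submatrix_consecutive_pos (le_add_right le_rfl) _

theorem tripleRatio_veronese_pos_general (n p q r : ℕ)
    (hp : 1 ≤ p) (hq : 1 ≤ q) (hr : 1 ≤ r) (hpqr : p + q + r = n) :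
    0 < tripleRatio n (ver n none) (ver n (some 1)) (ver n (some 0)) p q r := by
  unfold tripleRatio
  exact mul_pos (mul_pos
    (div_pos (Xw_veronese_pos (by omega)) (Xw_veronese_pos (by omega)))
    (div_pos (Xw_veronese_pos (by omega)) (Xw_veronese_pos (by omega))))
    (div_pos (Xw_veronese_pos (by omega)) (Xw_veronese_pos (by omega)))

/-- for `p, q, r ≥ 1` with `p + q + r = n`, the triple ratio of the
Veronese flags `ξ(∞), ξ(1), ξ(0)` is positive; equivalently, the triangle invariant
`τ_{pqr} = log T_{pqr}(ξ(∞), ξ(1), ξ(0))` of any `n`-Fuchsian representation is a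
well-defined real number. -/
theorem tripleRatio_veronese_pos (n p q r : ℕ) (hn : 2 ≤ n)
    (hp : 1 ≤ p) (hq : 1 ≤ q) (hr : 1 ≤ r) (hpqr : p + q + r = n) :
    0 < tripleRatio n (ver n none) (ver n (some 1)) (ver n (some 0)) p q r :=
  tripleRatio_veronese_pos_general n p q r hp hq hr hpqr
end
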